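/- arXiv:1508.01633 — 3 statements merged into one kernel-verified Lean document; each statement's English description precedes it below -/
import Mathlib

section
/- Let f₁, …, f_N : ℝ^d → ℝ be differentiable with F(w) = (1/N)∑_{i=1}^N f_i(w), and suppose each gradient ∇f_i is L-Lipschitz, i.e. ‖∇f_i(x) − ∇f_i(y)‖ ≤ L‖x − y‖ for all x, y. Then for all w, w̃ ∈ ℝ^d, the variance of the variance-reduced stochastic gradient over a uniformly random index i satisfies (1/N)∑_{i=1}^N ‖ĝ_i(w; w̃) − ∇F(w)‖² ≤ L²‖w − w̃‖², where ĝ_i(w; w̃) = ∇f_i(w) − ∇f_i(w̃) + ∇F(w̃). -/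
/-!
Since `∇F` is the average of the `∇fᵢ`, the vectors `ĝᵢ(w; w̃) − ∇F(w)` are the deviations of
`aᵢ = ∇fᵢ(w) − ∇fᵢ(w̃)` from their mean. A variance is at most the corresponding second moment,
and `‖aᵢ‖ ≤ L‖w − w̃‖` by the Lipschitz bound.
-/

open Finset

section Variance

variable {ι E : Type*} [NormedAddCommGroup E] [InnerProductSpace ℝ E]

theorem Finset.inner_sum_average (s : Finset ι) (a : ι → E) :
    inner ℝ (∑ i ∈ s, a i) ((#s : ℝ)⁻¹ • ∑ i ∈ s, a i) = #s * ‖(#s : ℝ)⁻¹ • ∑ i ∈ s, a i‖ ^ 2 := by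
  rcases s.eq_empty_or_nonempty with rfl | hs
  · simp
  have hcard : (#s : ℝ) ≠ 0 := by exact_mod_cast hs.card_pos.ne'
  rw [← real_inner_self_eq_norm_sq, real_inner_smul_left, ← mul_assoc, mul_inv_cancel₀ hcard,
    one_mul]

theorem Finset.sum_norm_sub_average_sq (s : Finset ι) (a : ι → E) :
    ∑ i ∈ s, ‖a i - (#s : ℝ)⁻¹ • ∑ j ∈ s, a j‖ ^ 2
      = ∑ i ∈ s, ‖a i‖ ^ 2 - #s * ‖(#s : ℝ)⁻¹ • ∑ j ∈ s, a j‖ ^ 2 := by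
  simp only [norm_sub_sq_real, sum_add_distrib, sum_sub_distrib, ← mul_sum, ← sum_inner,
    inner_sum_average, sum_const, nsmul_eq_mul]
  ring

theorem Finset.sum_norm_sub_average_sq_le (s : Finset ι) (a : ι → E) :
    ∑ i ∈ s, ‖a i - (#s : ℝ)⁻¹ • ∑ j ∈ s, a j‖ ^ 2 ≤ ∑ i ∈ s, ‖a i‖ ^ 2 := by
  rw [sum_norm_sub_average_sq]
  linarith [show 0 ≤ (#s : ℝ) * ‖(#s : ℝ)⁻¹ • ∑ j ∈ s, a j‖ ^ 2 by positivity]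

end Variance

section Gradient

variable {F : Type*} [NormedAddCommGroup F] [InnerProductSpace ℝ F] [CompleteSpace F]
  {x : F}

theorem HasGradientAt.fun_sum {ι : Type*} {s : Finset ι} {f : ι → F → ℝ} {f' : ι → F}
    (h : ∀ i ∈ s, HasGradientAt (f i) (f' i) x) :
    HasGradientAt (fun y => ∑ i ∈ s, f i y) (∑ i ∈ s, f' i) x := by
  rw [hasGradientAt_iff_hasFDerivAt, map_sum]
  exact HasFDerivAt.fun_sum fun i hi => (h i hi).hasFDerivAt

theorem HasGradientAt.const_mul {f : F → ℝ} {f' : F} (h : HasGradientAt f f' x) (c : ℝ) :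
    HasGradientAt (fun y => c * f y) (c • f') x := by
  rw [hasGradientAt_iff_hasFDerivAt, map_smulₛₗ]
  exact h.hasFDerivAt.const_mul c

end Gradient

theorem stmt_5_general (d N : ℕ)
    (f : Fin N → EuclideanSpace ℝ (Fin d) → ℝ)
    (hf : ∀ i, Differentiable ℝ (f i))
    (F : EuclideanSpace ℝ (Fin d) → ℝ)
    (hF : ∀ w, F w = (1 / (N : ℝ)) * ∑ i, f i w)
    (L : ℝ)
    (hLip : ∀ i x y, ‖gradient (f i) x - gradient (f i) y‖ ≤ L * ‖x - y‖)
    (w wt : EuclideanSpace ℝ (Fin d)) :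
    (1 / (N : ℝ)) * ∑ i,
        ‖(gradient (f i) w - gradient (f i) wt + gradient F wt) - gradient F w‖ ^ 2
      ≤ L ^ 2 * ‖w - wt‖ ^ 2 := by
  have hgradF (x) : gradient F x = (N : ℝ)⁻¹ • ∑ i, gradient (f i) x := by
    rw [funext hF, ← one_div]
    exact ((HasGradientAt.fun_sum fun i _ => (hf i x).hasGradientAt).const_mul _).gradient
  set a : Fin N → EuclideanSpace ℝ (Fin d) := fun i => gradient (f i) w - gradient (f i) wt
  have hcentered (i) : gradient (f i) w - gradient (f i) wt + gradient F wt - gradient F w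
      = a i - (N : ℝ)⁻¹ • ∑ j, a j := by
    simp only [a, hgradF, smul_sub, sum_sub_distrib]
    abel
  have hbound : ∑ i, ‖a i‖ ^ 2 ≤ N * (L * ‖w - wt‖) ^ 2 := by
    simpa using sum_le_card_nsmul univ _ _ fun i _ =>
      pow_le_pow_left₀ (norm_nonneg (a i)) (hLip i w wt) 2
  simp only [hcentered]
  calc _ ≤ (1 / (N : ℝ)) * (N * (L * ‖w - wt‖) ^ 2) := by
        gcongr
        simpa using (sum_norm_sub_average_sq_le univ a).trans hbound
    _ ≤ L ^ 2 * ‖w - wt‖ ^ 2 := by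
        rw [← mul_assoc, one_div, mul_pow]
        exact mul_le_of_le_one_left (by positivity) inv_mul_le_one

/-- If each gradient `∇ f i` is `L`-Lipschitz, then for all `w, wt` the variance of the
variance-reduced stochastic gradient `ĝ_i(w; wt) = ∇f_i(w) − ∇f_i(wt) + ∇F(wt)` over a
uniformly random index `i` satisfies `(1/N) ∑ i, ‖ĝ_i(w; wt) − ∇F(w)‖² ≤ L²‖w − wt‖²`. -/
theorem stmt_5 (d N : ℕ) (hN : 1 ≤ N)
    (f : Fin N → EuclideanSpace ℝ (Fin d) → ℝ)
    (hf : ∀ i, Differentiable ℝ (f i))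
    (F : EuclideanSpace ℝ (Fin d) → ℝ)
    (hF : ∀ w, F w = (1 / (N : ℝ)) * ∑ i, f i w)
    (L : ℝ)
    (hLip : ∀ i x y, ‖gradient (f i) x - gradient (f i) y‖ ≤ L * ‖x - y‖)
    (w wt : EuclideanSpace ℝ (Fin d)) :
    (1 / (N : ℝ)) * ∑ i,
        ‖(gradient (f i) w - gradient (f i) wt + gradient F wt) - gradient F w‖ ^ 2
      ≤ L ^ 2 * ‖w - wt‖ ^ 2 :=
  stmt_5_general d N f hf F hF L hLip w wt
end

section
/- Let f₁, …, f_N : ℝ^d → ℝ be differentiable with F(w) = (1/N)∑_{i=1}^N f_i(w). Suppose each gradient ∇f_i is L-Lipschitz, F is μ-strongly convex, i.e. F(x) ≥ F(y) + ⟨∇F(y), x − y⟩ + (μ/2)‖x − y‖² for all x, y, and w* ∈ ℝ^d satisfies ∇F(w*) = 0. Then for every learning rate η > 0 and all w, w̃ ∈ ℝ^d, the expected squared distance to w* after one variance-reduced SGD step satisfies (1/N)∑_{i=1}^N ‖w − η ĝ_i(w; w̃) − w*‖² ≤ (1 − 2ημ + 2η²L²)‖w − w*‖² + 2η²L²‖w̃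 − w*‖², where ĝ_i(w; w̃) = ∇f_i(w) − ∇f_i(w̃) + ∇F(w̃). -/
open Finset InnerProductSpace

/-!
Write `u = w - w*`. The `ĝ_i` average to `∇F(w)`, so the mean squared distance after the step
is `‖u‖² - 2η⟪∇F(w), u⟫ + η² · mean ‖ĝ_i‖²`. Strong convexity, used at `w` and at `w*` where
`∇F` vanishes, gives `⟪∇F(w), u⟫ ≥ μ‖u‖²`. For the second moment, `ĝ_i = A_i - (X_i - mean X)`
with `A_i = ∇f_i(w) - ∇f_i(w*)` and `X_i = ∇f_i(w̃) - ∇f_i(w*)`; since `(a + b)² ≤ 2a² + 2b²` and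
a variance is at most the second moment, `mean ‖ĝ_i‖² ≤ 2 mean ‖A_i‖² + 2 mean ‖X_i‖²`, and the
Lipschitz bounds finish.
-/

section

variable {ι E : Type*} [Fintype ι] [NormedAddCommGroup E] [InnerProductSpace ℝ E]

theorem inv_card_mul_sum_le [Nonempty ι] {x : ι → ℝ} {B : ℝ} (h : ∀ i, x i ≤ B) :
    (Fintype.card ι : ℝ)⁻¹ * ∑ i, x i ≤ B := by
  have hcard : (Fintype.card ι : ℝ) ≠ 0 := Nat.cast_ne_zero.mpr Fintype.card_ne_zero
  calc (Fintype.card ι : ℝ)⁻¹ * ∑ i, x i ≤ (Fintype.card ι : ℝ)⁻¹ * ∑ _i : ι, B := by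
        gcongr with i; exact h i
    _ = B := by rw [sum_const, card_univ, nsmul_eq_mul, inv_mul_cancel_left₀ hcard]

theorem inv_card_mul_sum_norm_sub_sq [Nonempty ι] (a : E) (X : ι → E) :
    (Fintype.card ι : ℝ)⁻¹ * ∑ i, ‖a - X i‖ ^ 2 =
      ‖a‖ ^ 2 - 2 * ⟪a, (Fintype.card ι : ℝ)⁻¹ • ∑ i, X i⟫_ℝ
        + (Fintype.card ι : ℝ)⁻¹ * ∑ i, ‖X i‖ ^ 2 := by
  have hcard : (Fintype.card ι : ℝ) ≠ 0 := Nat.cast_ne_zero.mpr Fintype.card_ne_zero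
  simp only [norm_sub_sq_real, sum_add_distrib, sum_sub_distrib, ← mul_sum, ← inner_sum,
    sum_const, card_univ, nsmul_eq_mul, real_inner_smul_right]
  field_simp

theorem inv_card_mul_sum_norm_sub_mean_sq_le [Nonempty ι] (X : ι → E) :
    (Fintype.card ι : ℝ)⁻¹ * ∑ i, ‖X i - (Fintype.card ι : ℝ)⁻¹ • ∑ j, X j‖ ^ 2 ≤
      (Fintype.card ι : ℝ)⁻¹ * ∑ i, ‖X i‖ ^ 2 := by
  simp_rw [norm_sub_rev (X _)]
  rw [inv_card_mul_sum_norm_sub_sq, real_inner_self_eq_norm_sq]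
  linarith [sq_nonneg ‖(Fintype.card ι : ℝ)⁻¹ • ∑ j, X j‖]

theorem inv_card_mul_sum_norm_sub_sub_mean_sq_le [Nonempty ι] (A X : ι → E) :
    (Fintype.card ι : ℝ)⁻¹ * ∑ i, ‖A i - (X i - (Fintype.card ι : ℝ)⁻¹ • ∑ j, X j)‖ ^ 2 ≤
      2 * ((Fintype.card ι : ℝ)⁻¹ * ∑ i, ‖A i‖ ^ 2)
        + 2 * ((Fintype.card ι : ℝ)⁻¹ * ∑ i, ‖X i‖ ^ 2) := by
  set m := (Fintype.card ι : ℝ)⁻¹ • ∑ j, X j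
  have hpoint : ∀ i, ‖A i - (X i - m)‖ ^ 2 ≤ 2 * ‖A i‖ ^ 2 + 2 * ‖X i - m‖ ^ 2 := fun i =>
    calc ‖A i - (X i - m)‖ ^ 2 ≤ (‖A i‖ + ‖X i - m‖) ^ 2 := by gcongr; exact norm_sub_le _ _
      _ ≤ 2 * ‖A i‖ ^ 2 + 2 * ‖X i - m‖ ^ 2 := by
        linarith [add_sq_le (a := ‖A i‖) (b := ‖X i - m‖)]
  calc (Fintype.card ι : ℝ)⁻¹ * ∑ i, ‖A i - (X i - m)‖ ^ 2
      ≤ (Fintype.card ι : ℝ)⁻¹ * ∑ i, (2 * ‖A i‖ ^ 2 + 2 * ‖X i - m‖ ^ 2) := by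
        gcongr with i; exact hpoint i
    _ = 2 * ((Fintype.card ι : ℝ)⁻¹ * ∑ i, ‖A i‖ ^ 2)
          + 2 * ((Fintype.card ι : ℝ)⁻¹ * ∑ i, ‖X i - m‖ ^ 2) := by
        rw [sum_add_distrib, ← mul_sum, ← mul_sum]; ring
    _ ≤ _ := by grw [inv_card_mul_sum_norm_sub_mean_sq_le X]

noncomputable def varianceReducedGradient (G : ι → E → E) (i : ι) (w wt : E) : E :=
  G i w - G i wt + (Fintype.card ι : ℝ)⁻¹ • ∑ j, G j wt

theorem inv_card_smul_sum_varianceReducedGradient [Nonempty ι] (G : ι → E → E) (w wt : E) :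
    (Fintype.card ι : ℝ)⁻¹ • ∑ i, varianceReducedGradient G i w wt =
      (Fintype.card ι : ℝ)⁻¹ • ∑ i, G i w := by
  have hcard : (Fintype.card ι : ℝ) ≠ 0 := Nat.cast_ne_zero.mpr Fintype.card_ne_zero
  simp only [varianceReducedGradient, sum_add_distrib, sum_sub_distrib, sum_const, card_univ,
    ← Nat.cast_smul_eq_nsmul ℝ, smul_smul, mul_inv_cancel₀ hcard, one_smul, sub_add_cancel]

theorem inv_card_mul_sum_norm_varianceReducedGradient_sq_le [Nonempty ι] {G : ι → E → E}
    {L : ℝ} (hG : ∀ i x y, ‖G i x - G i y‖ ≤ L * ‖x - y‖) {wstar : E}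
    (hstat : (Fintype.card ι : ℝ)⁻¹ • ∑ i, G i wstar = 0) (w wt : E) :
    (Fintype.card ι : ℝ)⁻¹ * ∑ i, ‖varianceReducedGradient G i w wt‖ ^ 2 ≤
      2 * L ^ 2 * ‖w - wstar‖ ^ 2 + 2 * L ^ 2 * ‖wt - wstar‖ ^ 2 := by
  set A := fun i => G i w - G i wstar
  set X := fun i => G i wt - G i wstar
  have hdecomp : ∀ i, varianceReducedGradient G i w wt =
      A i - (X i - (Fintype.card ι : ℝ)⁻¹ • ∑ j, X j) := fun i => by
    simp only [varianceReducedGradient, A, X, sum_sub_distrib, smul_sub, hstat]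
    abel
  have hsq : ∀ i x, ‖G i x - G i wstar‖ ^ 2 ≤ (L * ‖x - wstar‖) ^ 2 := fun i x => by
    gcongr; exact hG i x wstar
  simp only [hdecomp]
  grw [inv_card_mul_sum_norm_sub_sub_mean_sq_le, inv_card_mul_sum_le (hsq · w),
    inv_card_mul_sum_le (hsq · wt)]
  exact le_of_eq (by ring)

theorem gradient_inv_card_mul_sum [CompleteSpace E] {f : ι → E → ℝ} {x : E}
    (hf : ∀ i, DifferentiableAt ℝ (f i) x) :
    gradient (fun w => (Fintype.card ι : ℝ)⁻¹ * ∑ i, f i w) x =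
      (Fintype.card ι : ℝ)⁻¹ • ∑ i, gradient (f i) x := by
  have hderiv := (HasFDerivAt.fun_sum (u := univ) fun i _ => (hf i).hasFDerivAt).const_mul
    (Fintype.card ι : ℝ)⁻¹
  simp only [gradient, hderiv.fderiv, map_smul, map_sum]

theorem mul_norm_sub_sq_le_inner_gradient_sub [CompleteSpace E] {F : E → ℝ} {μ : ℝ}
    (hsc : ∀ x y, F x ≥ F y + ⟪gradient F y, x - y⟫_ℝ + μ / 2 * ‖x - y‖ ^ 2) (x y : E) :
    μ * ‖x - y‖ ^ 2 ≤ ⟪gradient F x - gradient F y, x - y⟫_ℝ := by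
  have hxy := hsc x y
  have hyx := hsc y x
  rw [← neg_sub x y, inner_neg_right, norm_neg] at hyx
  rw [inner_sub_left]
  linarith

end

/-- If each gradient `∇ f i` is `L`-Lipschitz, `F` is `μ`-strongly convex, and
`∇F(w*) = 0`, then for every `η > 0` and all `w, wt`, the expected squared distance to
`w*` after one variance-reduced SGD step satisfies
`(1/N) ∑ i, ‖w − η ĝ_i(w; wt) − w*‖² ≤ (1 − 2ημ + 2η²L²)‖w − w*‖² + 2η²L²‖wt − w*‖²`,
where `ĝ_i(w; wt) = ∇f_i(w) − ∇f_i(wt) + ∇F(wt)`. -/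
theorem stmt_7 (d N : ℕ) (hN : 1 ≤ N)
    (f : Fin N → EuclideanSpace ℝ (Fin d) → ℝ)
    (hf : ∀ i, Differentiable ℝ (f i))
    (F : EuclideanSpace ℝ (Fin d) → ℝ)
    (hF : ∀ w, F w = (1 / (N : ℝ)) * ∑ i, f i w)
    (L μ : ℝ)
    (hLip : ∀ i x y, ‖gradient (f i) x - gradient (f i) y‖ ≤ L * ‖x - y‖)
    (hsc : ∀ x y, F x ≥ F y + (inner ℝ (gradient F y) (x - y) : ℝ)
      + μ / 2 * ‖x - y‖ ^ 2)
    (wstar : EuclideanSpace ℝ (Fin d)) (hstat : gradient F wstar = 0)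
    (η : ℝ) (hη0 : 0 < η)
    (w wt : EuclideanSpace ℝ (Fin d)) :
    (1 / (N : ℝ)) * ∑ i,
        ‖w - η • (gradient (f i) w - gradient (f i) wt + gradient F wt) - wstar‖ ^ 2
      ≤ (1 - 2 * η * μ + 2 * η ^ 2 * L ^ 2) * ‖w - wstar‖ ^ 2
        + 2 * η ^ 2 * L ^ 2 * ‖wt - wstar‖ ^ 2 := by
  have : Nonempty (Fin N) := ⟨⟨0, hN⟩⟩
  have hinv : (1 / (N : ℝ)) = (Fintype.card (Fin N) : ℝ)⁻¹ := by simp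
  rw [hinv] at hF ⊢
  set G := fun i => gradient (f i)
  have hgradF : ∀ x, gradient F x = (Fintype.card (Fin N) : ℝ)⁻¹ • ∑ i, G i x := fun x => by
    rw [funext hF]; exact gradient_inv_card_mul_sum fun i => (hf i).differentiableAt
  set g := fun i => varianceReducedGradient G i w wt
  have hstep : ∀ i, w - η • (gradient (f i) w - gradient (f i) wt + gradient F wt) - wstar
      = (w - wstar) - η • g i := fun i => by
    simp only [g, varianceReducedGradient, G, hgradF]; abel
  have hmean : (Fintype.card (Fin N) : ℝ)⁻¹ • ∑ i, g i = gradient F w := by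
    rw [inv_card_smul_sum_varianceReducedGradient, hgradF]
  have hsecond : (Fintype.card (Fin N) : ℝ)⁻¹ * ∑ i, ‖g i‖ ^ 2
      ≤ 2 * L ^ 2 * ‖w - wstar‖ ^ 2 + 2 * L ^ 2 * ‖wt - wstar‖ ^ 2 :=
    inv_card_mul_sum_norm_varianceReducedGradient_sq_le hLip (by rw [← hgradF, hstat]) w wt
  have hmono : μ * ‖w - wstar‖ ^ 2 ≤ ⟪gradient F w, w - wstar⟫_ℝ := by
    simpa only [hstat, sub_zero] using mul_norm_sub_sq_le_inner_gradient_sub hsc w wstar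
  simp only [hstep]
  rw [inv_card_mul_sum_norm_sub_sq, ← smul_sum, smul_comm, real_inner_smul_right, hmean,
    real_inner_comm]
  simp only [norm_smul, mul_pow, Real.norm_eq_abs, sq_abs, ← mul_sum]
  linarith [mul_le_mul_of_nonneg_left hsecond (sq_nonneg η),
    mul_le_mul_of_nonneg_left hmono hη0.le]
end

section
/- 【Corollary】 Under the hypotheses of Theorem 1 — d ≥ 1, N ≥ 1, f₁, …, f_N : ℝ^d → ℝ differentiable with F(w) = (1/N)∑_{i=1}^N f_i(w), each f_i L_i-smooth with L-Lipschitz gradient and L = max{L₁, …, L_N}, F μ-strongly convex (μ > 0) with minimizer w*, θ ∈ (0,1], η ∈ (0, μθ/(2L²)), delays bounded by τ, m large enough that γ = (1 − 2η(μ − ηL²/θ))^{m/(1+τ)} + ηL²/(θμ − ηL²) < 1, and w̃^S the output after S stages of the distributed variance-reduced SGD recursion w^{t+1} = (1−θ)(w^t − η ĝ_{i_t}(w^{t−τ_t}; w̃^{s−1})) + θ(w^{t−τ_t} − η ĝ_{i_t}(w^{t−τ_t}; w̃^{s−1})) with i.i.d. uniform indices — the iterates converge linearly to w*: E‖w̃^S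 − w*‖² ≤ 2γ^S (F(w̃^0) − F(w*)) / μ. -/
/-!
Write `v_t = E‖w^t - w*‖²` inside a stage and `ṽ = E‖w̃ - w*‖²` for its anchor. The iterates up
to step `t` do not depend on the index drawn at step `t`, so averaging over that index can be done
pointwise in the past; there, unbiasedness of `ĝ`, the variance bound
`E‖ĝ‖² ≤ 2L²(‖w - w*‖² + ‖w̃ - w*‖²)`, strong monotonicity of `∇F` at `w*` and Young's inequality
give `v_{t+1} ≤ (1 - θ) v_t + (a - 1 + θ) v_{t - τ_t} + 2η²L² ṽ` with `a = 1 - 2η(μ - ηL²/θ)`.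
A recursion with delays at most `τ` whose coefficients add up to `a` decays like `a^{t/(1+τ)}` up
to its fixed point `2η²L² ṽ / (1 - a) ≤ ηL² ṽ / (θμ - ηL²)`: this is the contraction by `γ` per
stage. Finally `‖w̃⁰ - w*‖² ≤ 2(F(w̃⁰) - F(w*))/μ` by strong convexity, as `∇F(w*) = 0`.
-/

open Finset Function InnerProductSpace

section InnerProductSpace

variable {E : Type*} [NormedAddCommGroup E] [InnerProductSpace ℝ E]

lemma norm_one_sub_smul_add_smul_sq (θ : ℝ) (x y : E) :
    ‖(1 - θ) • x + θ • y‖ ^ 2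
      = (1 - θ) * ‖x‖ ^ 2 + θ * ‖y‖ ^ 2 - θ * (1 - θ) * ‖x - y‖ ^ 2 := by
  rw [norm_add_sq_real, norm_sub_sq_real, norm_smul, norm_smul, real_inner_smul_left,
    real_inner_smul_right, Real.norm_eq_abs, Real.norm_eq_abs, mul_pow, mul_pow, sq_abs, sq_abs]
  ring

lemma sum_norm_sub_smul_sq {κ : Type*} [Fintype κ] (u : E) (η : ℝ) (g : κ → E) :
    ∑ j, ‖u - η • g j‖ ^ 2
      = Fintype.card κ * ‖u‖ ^ 2 - 2 * η * ⟪∑ j, g j, u⟫_ℝ + η ^ 2 * ∑ j, ‖g j‖ ^ 2 := by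
  simp only [norm_sub_sq_real, norm_smul, real_inner_smul_right, sum_add_distrib,
    sum_sub_distrib, mul_pow, Real.norm_eq_abs, sq_abs, ← mul_sum, real_inner_comm u]
  simp [inner_sum, mul_sum, mul_assoc]

lemma sum_norm_sub_sq_le_sum_norm_sq {κ : Type*} [Fintype κ] (Y : κ → E) {c : E}
    (hc : ∑ j, Y j = (Fintype.card κ : ℝ) • c) :
    ∑ j, ‖Y j - c‖ ^ 2 ≤ ∑ j, ‖Y j‖ ^ 2 := by
  have h := sum_norm_sub_smul_sq c 1 Y
  simp only [one_smul, hc, real_inner_smul_left, real_inner_self_eq_norm_sq] at h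
  simp_rw [norm_sub_rev (Y _) c, h]
  nlinarith [sq_nonneg ‖c‖, (Fintype.card κ).cast_nonneg (α := ℝ)]

lemma le_of_mul_norm_sq_le_inner [Nontrivial E] {G : E → E} {μ L : ℝ} {x₀ : E}
    (hmono : ∀ x, μ * ‖x - x₀‖ ^ 2 ≤ ⟪G x, x - x₀⟫_ℝ) (hG : ∀ x, ‖G x‖ ≤ L * ‖x - x₀‖) :
    μ ≤ L := by
  obtain ⟨v, hv⟩ := exists_ne (0 : E)
  have hv0 : 0 < ‖v‖ := norm_pos_iff.2 hv
  have hmv := hmono (x₀ + v)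
  have hGv := hG (x₀ + v)
  rw [add_sub_cancel_left] at hmv hGv
  have : ⟪G (x₀ + v), v⟫_ℝ ≤ L * ‖v‖ * ‖v‖ :=
    (real_inner_le_norm _ v).trans (mul_le_mul_of_nonneg_right hGv hv0.le)
  exact le_of_mul_le_mul_right (hmv.trans (this.trans_eq (by ring))) (by positivity)

lemma norm_sub_le_of_sum_eq_card_smul {κ : Type*} [Fintype κ] [Nonempty κ]
    {g : κ → E → E} {G : E → E} {L : ℝ}
    (hG : ∀ x, ∑ j, g j x = (Fintype.card κ : ℝ) • G x)
    (hg : ∀ j x y, ‖g j x - g j y‖ ≤ L * ‖x - y‖) (x y : E) :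
    ‖G x - G y‖ ≤ L * ‖x - y‖ := by
  have hcard : (0 : ℝ) < Fintype.card κ := by exact_mod_cast Fintype.card_pos
  refine le_of_mul_le_mul_left ?_ hcard
  calc Fintype.card κ * ‖G x - G y‖ = ‖∑ j, (g j x - g j y)‖ := by
        rw [sum_sub_distrib, hG, hG, ← smul_sub, norm_smul, Real.norm_of_nonneg hcard.le]
    _ ≤ ∑ j, ‖g j x - g j y‖ := norm_sum_le _ _
    _ ≤ ∑ _j : κ, L * ‖x - y‖ := sum_le_sum fun j _ => hg j x y
    _ = Fintype.card κ * (L * ‖x - y‖) := by simp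

variable [CompleteSpace E]

lemma gradient_const_mul_sum {κ : Type*} [Fintype κ] {f : κ → E → ℝ} {x : E}
    (hf : ∀ i, DifferentiableAt ℝ (f i) x) (c : ℝ) :
    gradient (fun w => c * ∑ i, f i w) x = c • ∑ i, gradient (f i) x := by
  rw [gradient, fderiv_const_mul (DifferentiableAt.fun_sum fun i _ => hf i),
    fderiv_fun_sum fun i _ => hf i, map_smul, map_sum]
  rfl

lemma IsLocalMin.gradient_eq_zero {f : E → ℝ} {a : E} (h : IsLocalMin f a) :
    gradient f a = 0 := by
  rw [gradient, h.fderiv_eq_zero, map_zero]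

lemma inner_gradient_sub_gradient_ge {F : E → ℝ} {μ : ℝ}
    (hsc : ∀ x y, F x ≥ F y + ⟪gradient F y, x - y⟫_ℝ + μ / 2 * ‖x - y‖ ^ 2) (x y : E) :
    μ * ‖x - y‖ ^ 2 ≤ ⟪gradient F x - gradient F y, x - y⟫_ℝ := by
  have hxy := hsc x y
  have hyx := hsc y x
  rw [norm_sub_rev, ← neg_sub x y, inner_neg_right] at hyx
  rw [inner_sub_left]
  linarith

lemma sq_norm_sub_le_of_gradient_eq_zero {F : E → ℝ} {μ : ℝ} (hμ : 0 < μ)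
    (hsc : ∀ x y, F x ≥ F y + ⟪gradient F y, x - y⟫_ℝ + μ / 2 * ‖x - y‖ ^ 2) {x₀ : E}
    (h₀ : gradient F x₀ = 0) (x : E) : ‖x - x₀‖ ^ 2 ≤ 2 * (F x - F x₀) / μ := by
  have := hsc x x₀
  rw [h₀, inner_zero_left] at this
  rw [le_div_iff₀ hμ]
  linarith

end InnerProductSpace

lemma le_pow_mul_add_of_delayed_le {V : ℕ → ℝ} {ρ c₁ c₂ b C : ℝ} {τ m : ℕ} {del : ℕ → ℕ}
    (hV0 : 0 ≤ V 0) (hρ0 : 0 ≤ ρ) (hρ1 : ρ ≤ 1) (hc₁ : 0 ≤ c₁) (hc₂ : 0 ≤ c₂)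
    (hc : c₁ + c₂ ≤ ρ ^ (τ + 1)) (hC0 : 0 ≤ C) (hC : ρ ^ (τ + 1) * C + b ≤ C)
    (hdel : ∀ t < m, del t ≤ τ)
    (hrec : ∀ t < m, V (t + 1) ≤ c₁ * V t + c₂ * V (t - del t) + b) :
    ∀ t ≤ m, V t ≤ ρ ^ t * V 0 + C := by
  intro t
  induction t using Nat.strong_induction_on with
  | _ t ih =>
    rcases t with _ | t
    · intro _
      simpa using hC0
    intro ht
    have htm : t < m := ht
    have henv : ∀ k, t - τ ≤ k → k ≤ t → V k ≤ ρ ^ (t - τ) * V 0 + C := fun k hk hkt =>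
      (ih k (by omega) (by omega)).trans <| add_le_add_left
        (mul_le_mul_of_nonneg_right (pow_le_pow_of_le_one hρ0 hρ1 hk) hV0) C
    have hpow : ρ ^ (τ + 1) * ρ ^ (t - τ) ≤ ρ ^ (t + 1) := by
      rw [← pow_add]; exact pow_le_pow_of_le_one hρ0 hρ1 (by omega)
    calc V (t + 1) ≤ c₁ * V t + c₂ * V (t - del t) + b := hrec t htm
      _ ≤ (c₁ + c₂) * (ρ ^ (t - τ) * V 0 + C) + b := by
        have := henv t (Nat.sub_le t τ) le_rfl
        have := henv (t - del t) (by have := hdel t htm; omega) (Nat.sub_le t _)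
        nlinarith
      _ ≤ ρ ^ (τ + 1) * (ρ ^ (t - τ) * V 0 + C) + b := by gcongr
      _ ≤ ρ ^ (t + 1) * V 0 + C := by nlinarith

lemma le_rpow_mul_add_of_delayed_le {V : ℕ → ℝ} {a c₁ c₂ b : ℝ} {τ m : ℕ} {del : ℕ → ℕ}
    (hV0 : 0 ≤ V 0) (ha0 : 0 < a) (ha1 : a < 1) (hb : 0 ≤ b) (hc₁ : 0 ≤ c₁) (hc₂ : 0 ≤ c₂)
    (hc : c₁ + c₂ ≤ a) (hdel : ∀ t < m, del t ≤ τ)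
    (hrec : ∀ t < m, V (t + 1) ≤ c₁ * V t + c₂ * V (t - del t) + b) :
    V m ≤ a ^ ((m : ℝ) / (1 + τ)) * V 0 + b / (1 - a) := by
  set ρ := a ^ ((1 : ℝ) / (1 + τ))
  have hρpow : ∀ n : ℕ, ρ ^ n = a ^ ((n : ℝ) / (1 + τ)) := fun n => by
    rw [← Real.rpow_natCast, ← Real.rpow_mul ha0.le, one_div_mul_eq_div]
  have hρa : ρ ^ (τ + 1) = a := by
    rw [hρpow, Nat.cast_add_one, add_comm, div_self (by positivity), Real.rpow_one]
  have hC : a * (b / (1 - a)) + b = b / (1 - a) := by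
    field_simp [(sub_pos.2 ha1).ne']
    ring
  rw [← hρpow]
  exact le_pow_mul_add_of_delayed_le hV0 (by positivity)
    (Real.rpow_le_one ha0.le ha1.le (by positivity)) hc₁ hc₂ (by rw [hρa]; exact hc)
    (div_nonneg hb (sub_pos.2 ha1).le) (by rw [hρa]; exact hC.le) hdel hrec m le_rfl

lemma card_smul_sum_apply_eq_sum_sum {α β κ M : Type*} [Fintype α] [DecidableEq α]
    [Fintype β] [DecidableEq β] [Fintype κ] [AddCommMonoid M] (a : α) (b : β)
    (r : (α → β → κ) → κ → M)
    (hr : ∀ ι c j, r (update ι a (update (ι a) b c)) j = r ι j) :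
    Fintype.card κ • ∑ ι, r ι (ι a b) = ∑ ι, ∑ j, r ι j := by
  let resample : κ × (α → β → κ) → κ × (α → β → κ) :=
    fun p => (p.2 a b, update p.2 a (update (p.2 a) b p.1))
  -- `resample` swaps the drawn value at `(a, b)` with the stored one, so it is an involution
  have hinv : Involutive resample := fun p => by simp [resample]
  have key : ∑ p : κ × (α → β → κ), r p.2 (p.2 a b) = ∑ p : κ × (α → β → κ), r p.2 p.1 := by
    rw [← hinv.bijective.sum_comp]
    exact Fintype.sum_congr _ _ fun p => by simp [resample, hr]
  simp only [Fintype.sum_prod_type, sum_const, card_univ] at key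
  rw [key, sum_comm]

-- The algorithm along one index sequence `ι`: `ι s t` is the index drawn at inner step `t` of
-- stage `s + 1`, `wtil ι n` is `w̃ⁿ` and `W ι s t` the inner iterate `wᵗ` of stage `s + 1`.
structure IsStagedRun {S m : ℕ} {κ X : Type*} (step : κ → X → X → X → X)
    (del : Fin S → ℕ → ℕ) (w0 : X) (wtil : (Fin S → Fin m → κ) → ℕ → X)
    (W : (Fin S → Fin m → κ) → Fin S → ℕ → X) : Prop where
  output_zero : ∀ ι, wtil ι 0 = w0
  iterate_zero : ∀ ι s, W ι s 0 = wtil ι s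
  iterate_succ : ∀ ι s t (ht : t < m),
    W ι s (t + 1) = step (ι s ⟨t, ht⟩) (W ι s t) (W ι s (t - del s t)) (wtil ι s)
  output_succ : ∀ ι (s : Fin S), wtil ι (s + 1) = W ι s m

namespace IsStagedRun

variable {S m : ℕ} {κ X : Type*} {step : κ → X → X → X → X} {del : Fin S → ℕ → ℕ} {w0 : X}
  {wtil : (Fin S → Fin m → κ) → ℕ → X} {W : (Fin S → Fin m → κ) → Fin S → ℕ → X}

lemma iterate_congr (hr : IsStagedRun step del w0 wtil W) {ι ι' : Fin S → Fin m → κ}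
    {s : Fin S} (hw : wtil ι s = wtil ι' s) {t : ℕ} (ht : t ≤ m)
    (h : ∀ t' : Fin m, (t' : ℕ) < t → ι s t' = ι' s t') : W ι s t = W ι' s t := by
  induction t using Nat.strong_induction_on with
  | _ t ih =>
    rcases t with _ | t
    · rw [hr.iterate_zero, hr.iterate_zero, hw]
    have htm : t < m := ht
    rw [hr.iterate_succ ι s t htm, hr.iterate_succ ι' s t htm,
      ih t (by omega) (by omega) fun t' h' => h t' (by omega),
      ih (t - del s t) (by omega) (by omega) fun t' h' => h t' (by omega),
      hw, h ⟨t, htm⟩ (by simp)]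

lemma output_congr (hr : IsStagedRun step del w0 wtil W) (n : ℕ) {ι ι' : Fin S → Fin m → κ}
    (h : ∀ s : Fin S, (s : ℕ) < n → ι s = ι' s) : wtil ι n = wtil ι' n := by
  induction n with
  | zero => rw [hr.output_zero, hr.output_zero]
  | succ n ih =>
    by_cases hn : n < S
    · have hw : wtil ι n = wtil ι' n := ih fun s hs => h s (by omega)
      exact (hr.output_succ ι ⟨n, hn⟩).trans <|
        (hr.iterate_congr hw le_rfl fun t _ => by rw [h ⟨n, hn⟩ (by simp)]).trans
          (hr.output_succ ι' ⟨n, hn⟩).symm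
    · rw [funext fun s => h s (by omega)]

lemma card_smul_sum_iterate_succ [Fintype κ] (hr : IsStagedRun step del w0 wtil W)
    {M : Type*} [AddCommMonoid M] (Φ : X → M) (s : Fin S) {t : ℕ} (ht : t < m) :
    Fintype.card κ • ∑ ι, Φ (W ι s (t + 1))
      = ∑ ι, ∑ j, Φ (step j (W ι s t) (W ι s (t - del s t)) (wtil ι s)) := by
  simp only [hr.iterate_succ _ s t ht]
  refine card_smul_sum_apply_eq_sum_sum s ⟨t, ht⟩
    (fun ι j => Φ (step j (W ι s t) (W ι s (t - del s t)) (wtil ι s))) fun ι c j => ?_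
  set ι' := update ι s (update (ι s) ⟨t, ht⟩ c)
  have hw : wtil ι' s = wtil ι s :=
    hr.output_congr s fun s' hs' => update_of_ne (Fin.ne_of_lt hs') _ _
  have hpast : ∀ t' : Fin m, (t' : ℕ) < t → ι' s t' = ι s t' := fun t' ht' => by
    simp only [ι', update_self]
    exact update_of_ne (Fin.ne_of_lt (show t' < ⟨t, ht⟩ from ht')) _ _
  simp only [hr.iterate_congr hw ht.le hpast,
    hr.iterate_congr (t := t - del s t) hw (by omega) fun t' h' => hpast t' (by omega), hw]

end IsStagedRun

section VarianceReduced

variable {E κ : Type*} [NormedAddCommGroup E] [InnerProductSpace ℝ E] [Fintype κ]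
  (gf : κ → E → E) (gF : E → E)

-- `vrGrad gf gF i p wt` is the paper's `ĝ_i(p; w̃)` for `gf i = ∇f_i` and `gF = ∇F`.
def vrGrad (i : κ) (p wt : E) : E := gf i p - gf i wt + gF wt

def vrStep (θ η : ℝ) (i : κ) (w p wt : E) : E :=
  (1 - θ) • (w - η • vrGrad gf gF i p wt) + θ • (p - η • vrGrad gf gF i p wt)

variable {gf gF} {wstar : E} {L : ℝ}

lemma sum_vrGrad (hgF : ∀ x, ∑ j, gf j x = (Fintype.card κ : ℝ) • gF x) (p wt : E) :
    ∑ j, vrGrad gf gF j p wt = (Fintype.card κ : ℝ) • gF p := by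
  simp only [vrGrad, sum_add_distrib, sum_sub_distrib, hgF, sum_const, card_univ,
    ← Nat.cast_smul_eq_nsmul ℝ]
  abel

lemma sum_norm_vrGrad_sq_le (hgF : ∀ x, ∑ j, gf j x = (Fintype.card κ : ℝ) • gF x)
    (hzero : gF wstar = 0) (hLip : ∀ j x y, ‖gf j x - gf j y‖ ≤ L * ‖x - y‖) (p wt : E) :
    ∑ j, ‖vrGrad gf gF j p wt‖ ^ 2
      ≤ Fintype.card κ * (2 * L ^ 2 * ‖p - wstar‖ ^ 2 + 2 * L ^ 2 * ‖wt - wstar‖ ^ 2) := by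
  set A := fun j => gf j p - gf j wstar
  set Y := fun j => gf j wt - gf j wstar
  have hsplit : ∀ j, ‖vrGrad gf gF j p wt‖ ^ 2 ≤ 2 * ‖A j‖ ^ 2 + 2 * ‖Y j - gF wt‖ ^ 2 :=
    fun j => by
      have hA : vrGrad gf gF j p wt = A j - (Y j - gF wt) := by simp only [vrGrad, A, Y]; abel
      rw [hA]
      nlinarith [norm_sub_le (A j) (Y j - gF wt), norm_nonneg (A j - (Y j - gF wt)),
        sq_nonneg (‖A j‖ - ‖Y j - gF wt‖)]
  have hsq : ∀ j x, ‖gf j x - gf j wstar‖ ^ 2 ≤ L ^ 2 * ‖x - wstar‖ ^ 2 := fun j x => by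
    rw [← mul_pow]; exact pow_le_pow_left₀ (norm_nonneg _) (hLip j x wstar) 2
  -- `Y` has mean `gF wt` because `gF wstar = 0`
  have hY : ∑ j, ‖Y j - gF wt‖ ^ 2 ≤ ∑ j, ‖Y j‖ ^ 2 :=
    sum_norm_sub_sq_le_sum_norm_sq Y (by simp only [Y, sum_sub_distrib, hgF, hzero, smul_zero,
      sub_zero])
  calc ∑ j, ‖vrGrad gf gF j p wt‖ ^ 2
      ≤ 2 * ∑ j, ‖A j‖ ^ 2 + 2 * ∑ j, ‖Y j - gF wt‖ ^ 2 := by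
        rw [mul_sum, mul_sum, ← sum_add_distrib]; exact sum_le_sum fun j _ => hsplit j
    _ ≤ 2 * ∑ _j : κ, L ^ 2 * ‖p - wstar‖ ^ 2 + 2 * ∑ _j : κ, L ^ 2 * ‖wt - wstar‖ ^ 2 := by
        gcongr 2 * ?_ + 2 * ?_
        · exact sum_le_sum fun j _ => hsq j p
        · exact hY.trans (sum_le_sum fun j _ => hsq j wt)
    _ = _ := by simp only [sum_const, card_univ, nsmul_eq_mul]; ring

lemma sum_norm_vrStep_sub_sq_le [Nonempty κ] {θ η μ : ℝ}
    (hgF : ∀ x, ∑ j, gf j x = (Fintype.card κ : ℝ) • gF x) (hzero : gF wstar = 0)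
    (hLip : ∀ j x y, ‖gf j x - gf j y‖ ≤ L * ‖x - y‖)
    (hmono : ∀ x, μ * ‖x - wstar‖ ^ 2 ≤ ⟪gF x, x - wstar⟫_ℝ)
    (hθ0 : 0 < θ) (hθ1 : θ ≤ 1) (hη0 : 0 ≤ η) (w p wt : E) :
    ∑ j, ‖vrStep gf gF θ η j w p wt - wstar‖ ^ 2
      ≤ Fintype.card κ * ((1 - θ) * ‖w - wstar‖ ^ 2
        + (θ - 2 * η * μ + 2 * η ^ 2 * L ^ 2 / θ) * ‖p - wstar‖ ^ 2
        + 2 * η ^ 2 * L ^ 2 * ‖wt - wstar‖ ^ 2) := by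
  set u := (1 - θ) • (w - wstar) + θ • (p - wstar)
  set P := ‖p - wstar‖
  set D := ‖w - p‖
  set Q := η ^ 2 * L ^ 2 / θ * P ^ 2
  have hstep : ∀ j, vrStep gf gF θ η j w p wt - wstar = u - η • vrGrad gf gF j p wt :=
    fun j => by simp only [vrStep, u]; module
  have hu : ‖u‖ ^ 2 = (1 - θ) * ‖w - wstar‖ ^ 2 + θ * P ^ 2 - θ * (1 - θ) * D ^ 2 := by
    rw [norm_one_sub_smul_add_smul_sq, sub_sub_sub_cancel_right]
  have hinner : μ * P ^ 2 - (1 - θ) * (L * P * D) ≤ ⟪gF p, u⟫_ℝ := by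
    have hgp : ‖gF p‖ ≤ L * P := by
      simpa [hzero] using norm_sub_le_of_sum_eq_card_smul hgF hLip p wstar
    have hwp : -(L * P * D) ≤ ⟪gF p, w - p⟫_ℝ := by
      nlinarith [neg_abs_le ⟪gF p, w - p⟫_ℝ, abs_real_inner_le_norm (gF p) (w - p),
        mul_le_mul_of_nonneg_right hgp (norm_nonneg (w - p))]
    have hu' : u = (p - wstar) + (1 - θ) • (w - p) := by simp only [u]; module
    rw [hu', inner_add_right, real_inner_smul_right]
    nlinarith [hmono p]
  have hQθ : θ * Q = η ^ 2 * L ^ 2 * P ^ 2 := by simp only [Q]; field_simp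
  have hQ : η ^ 2 * L ^ 2 * P ^ 2 ≤ Q := by nlinarith [sq_nonneg (η * L * P)]
  -- Young's inequality, to absorb the cross term of `hinner` into `-θ(1-θ)D²` from `hu`
  have hyoung : 2 * η * L * P * D ≤ θ * D ^ 2 + Q := by nlinarith [sq_nonneg (θ * D - η * L * P)]
  have hvar := sum_norm_vrGrad_sq_le hgF hzero hLip p wt
  have hcard : (0 : ℝ) < Fintype.card κ := by exact_mod_cast Fintype.card_pos
  have key : ‖u‖ ^ 2 - 2 * η * ⟪gF p, u⟫_ℝ
        + η ^ 2 * (2 * L ^ 2 * P ^ 2 + 2 * L ^ 2 * ‖wt - wstar‖ ^ 2)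
      ≤ (1 - θ) * ‖w - wstar‖ ^ 2 + (θ - 2 * η * μ + 2 * η ^ 2 * L ^ 2 / θ) * P ^ 2
        + 2 * η ^ 2 * L ^ 2 * ‖wt - wstar‖ ^ 2 := by
    have h2Q : 2 * η ^ 2 * L ^ 2 / θ * P ^ 2 = 2 * Q := by simp only [Q]; ring
    rw [hu]
    linarith [mul_le_mul_of_nonneg_left hinner (by positivity : 0 ≤ 2 * η),
      mul_le_mul_of_nonneg_left hyoung (sub_nonneg.2 hθ1)]
  rw [Fintype.sum_congr _ _ fun j => by rw [hstep j], sum_norm_sub_smul_sq, sum_vrGrad hgF,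
    real_inner_smul_left]
  linarith [mul_le_mul_of_nonneg_left key hcard.le, mul_le_mul_of_nonneg_left hvar (sq_nonneg η)]

end VarianceReduced

lemma one_sub_two_mul_mul_sub_pos {θ η μ L : ℝ} (hθ0 : 0 < θ) (hθ1 : θ ≤ 1) (hη0 : 0 < η)
    (hμ0 : 0 < μ) (hμL : μ ≤ L) : 0 < 1 - 2 * η * (μ - η * L ^ 2 / θ) := by
  have hθL : η ^ 2 * μ ^ 2 ≤ η ^ 2 * L ^ 2 / θ :=
    (by gcongr : η ^ 2 * μ ^ 2 ≤ η ^ 2 * L ^ 2).trans (le_div_self (by positivity) hθ0 hθ1)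
  have ha : 1 - 2 * η * (μ - η * L ^ 2 / θ) = 1 - 2 * η * μ + 2 * (η ^ 2 * L ^ 2 / θ) := by ring
  nlinarith [sq_nonneg (1 - 2 * η * μ)]

namespace IsStagedRun

variable {E κ : Type*} [NormedAddCommGroup E] [InnerProductSpace ℝ E] [Fintype κ] [Nonempty κ]
  {gf : κ → E → E} {gF : E → E} {wstar : E} {L μ θ η : ℝ} {S m : ℕ} {del : Fin S → ℕ → ℕ}
  {w0 : E} {wtil : (Fin S → Fin m → κ) → ℕ → E} {W : (Fin S → Fin m → κ) → Fin S → ℕ → E}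

lemma sum_norm_iterate_succ_sub_sq_le (hr : IsStagedRun (vrStep gf gF θ η) del w0 wtil W)
    (hgF : ∀ x, ∑ j, gf j x = (Fintype.card κ : ℝ) • gF x) (hzero : gF wstar = 0)
    (hLip : ∀ j x y, ‖gf j x - gf j y‖ ≤ L * ‖x - y‖)
    (hmono : ∀ x, μ * ‖x - wstar‖ ^ 2 ≤ ⟪gF x, x - wstar⟫_ℝ)
    (hθ0 : 0 < θ) (hθ1 : θ ≤ 1) (hη0 : 0 ≤ η) (s : Fin S) {t : ℕ} (ht : t < m) :
    ∑ ι, ‖W ι s (t + 1) - wstar‖ ^ 2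
      ≤ (1 - θ) * ∑ ι, ‖W ι s t - wstar‖ ^ 2
        + (θ - 2 * η * μ + 2 * η ^ 2 * L ^ 2 / θ) * ∑ ι, ‖W ι s (t - del s t) - wstar‖ ^ 2
        + 2 * η ^ 2 * L ^ 2 * ∑ ι, ‖wtil ι s - wstar‖ ^ 2 := by
  have hcard : (0 : ℝ) < Fintype.card κ := by exact_mod_cast Fintype.card_pos
  refine le_of_mul_le_mul_left ?_ hcard
  rw [← nsmul_eq_mul, hr.card_smul_sum_iterate_succ (‖· - wstar‖ ^ 2) s ht]
  calc _ ≤ ∑ ι, (Fintype.card κ : ℝ) * ((1 - θ) * ‖W ι s t - wstar‖ ^ 2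
          + (θ - 2 * η * μ + 2 * η ^ 2 * L ^ 2 / θ) * ‖W ι s (t - del s t) - wstar‖ ^ 2
          + 2 * η ^ 2 * L ^ 2 * ‖wtil ι s - wstar‖ ^ 2) :=
        sum_le_sum fun ι _ => sum_norm_vrStep_sub_sq_le hgF hzero hLip hmono hθ0 hθ1 hη0 _ _ _
    _ = _ := by rw [← mul_sum]; simp only [sum_add_distrib, ← mul_sum]

lemma sum_norm_output_succ_sub_sq_le (hr : IsStagedRun (vrStep gf gF θ η) del w0 wtil W)
    (hgF : ∀ x, ∑ j, gf j x = (Fintype.card κ : ℝ) • gF x) (hzero : gF wstar = 0)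
    (hLip : ∀ j x y, ‖gf j x - gf j y‖ ≤ L * ‖x - y‖)
    (hmono : ∀ x, μ * ‖x - wstar‖ ^ 2 ≤ ⟪gF x, x - wstar⟫_ℝ)
    (hθ0 : 0 < θ) (hθ1 : θ ≤ 1) (hη0 : 0 < η) (hμ0 : 0 < μ) (hμL : μ ≤ L)
    (hηL : η * L ^ 2 < θ * μ) {τ : ℕ} (hdel : ∀ s t, t < m → del s t ≤ τ) (s : Fin S) :
    ∑ ι, ‖wtil ι (s + 1) - wstar‖ ^ 2
      ≤ ((1 - 2 * η * (μ - η * L ^ 2 / θ)) ^ ((m : ℝ) / (1 + τ))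
          + η * L ^ 2 / (θ * μ - η * L ^ 2)) * ∑ ι, ‖wtil ι s - wstar‖ ^ 2 := by
  set a := 1 - 2 * η * (μ - η * L ^ 2 / θ)
  set B := ∑ ι, ‖wtil ι s - wstar‖ ^ 2
  have hB : 0 ≤ B := by positivity
  have hden : 0 < θ * μ - η * L ^ 2 := sub_pos.2 hηL
  have h1a : 1 - a = 2 * η * (θ * μ - η * L ^ 2) / θ := by simp only [a]; field_simp; ring
  have ha1 : a < 1 := by
    have : 0 < 1 - a := by rw [h1a]; positivity
    linarith
  have hc₂ : 0 ≤ θ - 2 * η * μ + 2 * η ^ 2 * L ^ 2 / θ := by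
    have hLμ : μ ^ 2 ≤ L ^ 2 := by gcongr
    rw [show θ - 2 * η * μ + 2 * η ^ 2 * L ^ 2 / θ
      = ((θ - η * μ) ^ 2 + η ^ 2 * μ ^ 2 + 2 * η ^ 2 * (L ^ 2 - μ ^ 2)) / θ by field_simp; ring]
    positivity
  have hres : 2 * η ^ 2 * L ^ 2 * B / (1 - a) ≤ η * L ^ 2 / (θ * μ - η * L ^ 2) * B := by
    rw [h1a, show 2 * η ^ 2 * L ^ 2 * B / (2 * η * (θ * μ - η * L ^ 2) / θ)
      = θ * (η * L ^ 2 / (θ * μ - η * L ^ 2) * B) by field_simp]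
    exact mul_le_of_le_one_left (by positivity) hθ1
  have hrec := le_rpow_mul_add_of_delayed_le (V := fun t => ∑ ι, ‖W ι s t - wstar‖ ^ 2)
    (by positivity) (one_sub_two_mul_mul_sub_pos hθ0 hθ1 hη0 hμ0 hμL) ha1 (by positivity)
    (sub_nonneg.2 hθ1) hc₂ (le_of_eq (by ring)) (fun t ht => hdel s t ht)
    (fun t ht => hr.sum_norm_iterate_succ_sub_sq_le hgF hzero hLip hmono hθ0 hθ1 hη0.le s ht)
  simp only [hr.iterate_zero, ← hr.output_succ] at hrec
  linarith

end IsStagedRun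

theorem stmt_10_general (d N : ℕ) (hd : 1 ≤ d) (hN : 1 ≤ N)
    (f : Fin N → EuclideanSpace ℝ (Fin d) → ℝ)
    (hf : ∀ i, Differentiable ℝ (f i))
    (F : EuclideanSpace ℝ (Fin d) → ℝ)
    (hF : ∀ w, F w = (1 / (N : ℝ)) * ∑ i, f i w)
    (L μ θ η : ℝ)
    (hLip : ∀ i x y, ‖gradient (f i) x - gradient (f i) y‖ ≤ L * ‖x - y‖)
    (hμ0 : 0 < μ)
    (hsc : ∀ x y, F x ≥ F y + (inner ℝ (gradient F y) (x - y) : ℝ)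
      + μ / 2 * ‖x - y‖ ^ 2)
    (wstar : EuclideanSpace ℝ (Fin d)) (hmin : ∀ w, F wstar ≤ F w)
    (hθ0 : 0 < θ) (hθ1 : θ ≤ 1)
    (hη0 : 0 < η) (hη : η < μ * θ / (2 * L ^ 2))
    (τ m S : ℕ)
    (del : Fin S → ℕ → ℕ) (hdel : ∀ s t, t < m → del s t ≤ min τ t)
    (γ : ℝ)
    (hγ : γ = (1 - 2 * η * (μ - η * L ^ 2 / θ)) ^ ((m : ℝ) / (1 + (τ : ℝ)))
      + η * L ^ 2 / (θ * μ - η * L ^ 2))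
    (w0 : EuclideanSpace ℝ (Fin d))
    -- `wtil ι s` is the stage output `w̃^s`, and `W ι s t` is the inner iterate `w^t`
    -- of stage `s+1`, both for the index sequence `ι` (`ι s t` is the index `i_t`
    -- drawn in stage `s+1`; the expectation is uniform over all such sequences).
    (wtil : (Fin S → Fin m → Fin N) → ℕ → EuclideanSpace ℝ (Fin d))
    (W : (Fin S → Fin m → Fin N) → Fin S → ℕ → EuclideanSpace ℝ (Fin d))
    (hw0 : ∀ ι, wtil ι 0 = w0)
    (hstart : ∀ ι (s : Fin S), W ι s 0 = wtil ι s.val)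
    (hrec : ∀ ι (s : Fin S) (t : ℕ) (ht : t < m),
      W ι s (t + 1) =
        (1 - θ) • (W ι s t - η • (gradient (f (ι s ⟨t, ht⟩)) (W ι s (t - del s t))
            - gradient (f (ι s ⟨t, ht⟩)) (wtil ι s.val) + gradient F (wtil ι s.val)))
        + θ • (W ι s (t - del s t) - η • (gradient (f (ι s ⟨t, ht⟩)) (W ι s (t - del s t))
            - gradient (f (ι s ⟨t, ht⟩)) (wtil ι s.val) + gradient F (wtil ι s.val))))
    (hout : ∀ ι (s : Fin S), wtil ι (s.val + 1) = W ι s m) :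
    (1 / (N : ℝ) ^ (S * m)) * ∑ ι : Fin S → Fin m → Fin N, ‖wtil ι S - wstar‖ ^ 2
      ≤ 2 * γ ^ S * (F w0 - F wstar) / μ := by
  have : Nonempty (Fin N) := ⟨⟨0, hN⟩⟩
  have : NeZero d := ⟨by omega⟩
  have hgF : ∀ x, ∑ j, gradient (f j) x = (Fintype.card (Fin N) : ℝ) • gradient F x := fun x => by
    rw [funext hF, gradient_const_mul_sum fun i => (hf i).differentiableAt, smul_smul,
      Fintype.card_fin, mul_one_div_cancel (by positivity), one_smul]
  have hzero : gradient F wstar = 0 :=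
    (isMinOn_univ_iff.2 hmin |>.isLocalMin Filter.univ_mem).gradient_eq_zero
  have hmono : ∀ x, μ * ‖x - wstar‖ ^ 2 ≤ ⟪gradient F x, x - wstar⟫_ℝ := fun x => by
    simpa [hzero] using inner_gradient_sub_gradient_ge hsc x wstar
  have hμL : μ ≤ L := le_of_mul_norm_sq_le_inner hmono fun x => by
    simpa [hzero] using norm_sub_le_of_sum_eq_card_smul hgF hLip x wstar
  have hηL : η * L ^ 2 < θ * μ := by
    rw [lt_div_iff₀ (by nlinarith)] at hη
    nlinarith
  have hr : IsStagedRun (vrStep (fun j => gradient (f j)) (gradient F) θ η) del w0 wtil W :=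
    ⟨hw0, hstart, hrec, hout⟩
  have hγ0 : 0 ≤ γ := hγ ▸ add_nonneg
    (Real.rpow_nonneg (one_sub_two_mul_mul_sub_pos hθ0 hθ1 hη0 hμ0 hμL).le _)
    (div_nonneg (by positivity) (sub_pos.2 hηL).le)
  have hstage : ∀ s < S, ∑ ι, ‖wtil ι (s + 1) - wstar‖ ^ 2 ≤ γ * ∑ ι, ‖wtil ι s - wstar‖ ^ 2 :=
    fun s hs => hγ ▸ hr.sum_norm_output_succ_sub_sq_le hgF hzero hLip hmono hθ0 hθ1 hη0 hμ0 hμL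
      hηL (fun s t ht => (hdel s t ht).trans (min_le_left _ _)) ⟨s, hs⟩
  calc (1 / (N : ℝ) ^ (S * m)) * ∑ ι : Fin S → Fin m → Fin N, ‖wtil ι S - wstar‖ ^ 2
      ≤ (1 / (N : ℝ) ^ (S * m)) * (γ ^ S * ∑ ι : Fin S → Fin m → Fin N, ‖wtil ι 0 - wstar‖ ^ 2) :=
        mul_le_mul_of_nonneg_left
          (le_geom (u := fun n => ∑ ι, ‖wtil ι n - wstar‖ ^ 2) hγ0 S hstage) (by positivity)
    _ = γ ^ S * ‖w0 - wstar‖ ^ 2 := by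
        simp only [hw0, sum_const, card_univ, Fintype.card_fun, Fintype.card_fin, nsmul_eq_mul,
          ← pow_mul, Nat.cast_pow, mul_comm m S]
        field_simp
    _ ≤ γ ^ S * (2 * (F w0 - F wstar) / μ) :=
        mul_le_mul_of_nonneg_left (sq_norm_sub_le_of_gradient_eq_zero hμ0 hsc hzero w0)
          (pow_nonneg hγ0 S)
    _ = 2 * γ ^ S * (F w0 - F wstar) / μ := by ring

/-- **Corollary.** Under the hypotheses of Theorem 1, the iterates of the distributed
variance-reduced SGD recursion converge linearly to the minimizer `w*`:
`E‖w̃^S − w*‖² ≤ 2 γ^S (F(w̃^0) − F(w*)) / μ`. -/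
theorem stmt_10 (d N : ℕ) (hd : 1 ≤ d) (hN : 1 ≤ N)
    (f : Fin N → EuclideanSpace ℝ (Fin d) → ℝ)
    (hf : ∀ i, Differentiable ℝ (f i))
    (F : EuclideanSpace ℝ (Fin d) → ℝ)
    (hF : ∀ w, F w = (1 / (N : ℝ)) * ∑ i, f i w)
    (Li : Fin N → ℝ) (L μ θ η : ℝ)
    (hsmooth : ∀ i x y, f i x ≤ f i y + (inner ℝ (gradient (f i) y) (x - y) : ℝ)
      + Li i / 2 * ‖x - y‖ ^ 2)
    (hLip : ∀ i x y, ‖gradient (f i) x - gradient (f i) y‖ ≤ L * ‖x - y‖)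
    (hL : IsGreatest (Set.range Li) L)
    (hμ0 : 0 < μ)
    (hsc : ∀ x y, F x ≥ F y + (inner ℝ (gradient F y) (x - y) : ℝ)
      + μ / 2 * ‖x - y‖ ^ 2)
    (wstar : EuclideanSpace ℝ (Fin d)) (hmin : ∀ w, F wstar ≤ F w)
    (hθ0 : 0 < θ) (hθ1 : θ ≤ 1)
    (hη0 : 0 < η) (hη : η < μ * θ / (2 * L ^ 2))
    (τ m S : ℕ) (hm : 1 ≤ m)
    (del : Fin S → ℕ → ℕ) (hdel : ∀ s t, t < m → del s t ≤ min τ t)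
    (γ : ℝ)
    (hγ : γ = (1 - 2 * η * (μ - η * L ^ 2 / θ)) ^ ((m : ℝ) / (1 + (τ : ℝ)))
      + η * L ^ 2 / (θ * μ - η * L ^ 2))
    (hγ1 : γ < 1)
    (w0 : EuclideanSpace ℝ (Fin d))
    -- `wtil ι s` is the stage output `w̃^s`, and `W ι s t` is the inner iterate `w^t`
    -- of stage `s+1`, both for the index sequence `ι` (`ι s t` is the index `i_t`
    -- drawn in stage `s+1`; the expectation is uniform over all such sequences).
    (wtil : (Fin S → Fin m → Fin N) → ℕ → EuclideanSpace ℝ (Fin d))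
    (W : (Fin S → Fin m → Fin N) → Fin S → ℕ → EuclideanSpace ℝ (Fin d))
    (hw0 : ∀ ι, wtil ι 0 = w0)
    (hstart : ∀ ι (s : Fin S), W ι s 0 = wtil ι s.val)
    (hrec : ∀ ι (s : Fin S) (t : ℕ) (ht : t < m),
      W ι s (t + 1) =
        (1 - θ) • (W ι s t - η • (gradient (f (ι s ⟨t, ht⟩)) (W ι s (t - del s t))
            - gradient (f (ι s ⟨t, ht⟩)) (wtil ι s.val) + gradient F (wtil ι s.val)))
        + θ • (W ι s (t - del s t) - η • (gradient (f (ι s ⟨t, ht⟩)) (W ι s (t - del s t))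
            - gradient (f (ι s ⟨t, ht⟩)) (wtil ι s.val) + gradient F (wtil ι s.val))))
    (hout : ∀ ι (s : Fin S), wtil ι (s.val + 1) = W ι s m) :
    (1 / (N : ℝ) ^ (S * m)) * ∑ ι : Fin S → Fin m → Fin N, ‖wtil ι S - wstar‖ ^ 2
      ≤ 2 * γ ^ S * (F w0 - F wstar) / μ :=
  stmt_10_general d N hd hN f hf F hF L μ θ η hLip hμ0 hsc wstar hmin hθ0 hθ1 hη0 hη τ m S del hdel
    γ hγ w0 wtil W hw0 hstart hrec hout
end
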